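/- Let P = {p_1,...,p_n} and Q = {q_1,...,q_n} be orthonormal sets in R^d with 2n < d, and suppose there is a unit vector ĉ with Σ_i |⟨p_i, ĉ⟩| − Σ_i |⟨q_i, ĉ⟩| > (1/2)√n. Then for z ≥ 2 there exists a unit vector c with Σ_{i=1}^n (2 − 2|⟨q_i,c⟩|)^{z/2} − Σ_{i=1}^n (2 − 2|⟨p_i,c⟩|)^{z/2} ≥ 2^{z/2}·(z/8)·√n − 2^{z/2}·(z/8)·(z/2 − 1). -/

import Mathlib

/-!
Write `s = z / 2`. Since `2n < d`, the span of the `p i` and `q i` is a proper subspace, so the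
projection of `ĉ / 2` onto it (of norm at most `1 / 2`) can be completed to a unit vector `c` by a
vector orthogonal to all `p i`, `q i`; then `2 |⟪v, c⟫| = |⟪v, ĉ⟫|` for every `v = p i, q i`.
With `a = |⟪v, ĉ⟫| ≤ 1`, Bernoulli's inequality gives `(2 - a) ^ s ≥ 2 ^ s (1 - s a / 2)` and a
second-order Taylor bound gives `(2 - a) ^ s ≤ 2 ^ s (1 - s a / 2 + s (s - 1) a ^ 2 / 4)`.
Summing, the difference of the two sums is at least
`2 ^ s (s / 2 (∑ |⟪p i, ĉ⟫| - ∑ |⟪q i, ĉ⟫|) - s (s - 1) / 4 ∑ ⟪p i, ĉ⟫ ^ 2)`, and the gap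
hypothesis together with Bessel's inequality `∑ ⟪p i, ĉ⟫ ^ 2 ≤ 1` finishes the proof.
-/

open scoped RealInnerProductSpace
open Module Finset

section Completion

variable {E : Type*} [NormedAddCommGroup E] [InnerProductSpace ℝ E]

theorem Submodule.exists_norm_eq_one_sub_mem_orthogonal (K : Submodule ℝ E)
    [K.HasOrthogonalProjection] (hK : K ≠ ⊤) {y : E} (hy : ‖y‖ ≤ 1) :
    ∃ c : E, ‖c‖ = 1 ∧ c - y ∈ Kᗮ := by
  have : Nontrivial Kᗮ :=
    Submodule.nontrivial_iff_ne_bot.2 (mt K.orthogonal_eq_bot_iff.1 hK)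
  obtain ⟨⟨e, heK⟩, he⟩ := exists_norm_eq Kᗮ zero_le_one
  replace he : ‖e‖ = 1 := he
  set u := K.starProjection y
  have hu : ‖u‖ ≤ 1 := (K.norm_starProjection_apply_le y).trans hy
  set r := √(1 - ‖u‖ ^ 2)
  refine ⟨u + r • e, ?_, ?_⟩
  · have hue : ⟪u, r • e⟫ = 0 :=
      Submodule.inner_right_of_mem_orthogonal (K.starProjection_apply_mem y)
        (Kᗮ.smul_mem r heK)
    have hsq : ‖u + r • e‖ ^ 2 = 1 := by
      rw [sq, norm_add_sq_eq_norm_sq_add_norm_sq_real hue, norm_smul, he, mul_one,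
        Real.norm_eq_abs, abs_mul_abs_self, Real.mul_self_sqrt (by nlinarith [norm_nonneg u])]
      ring
    exact (pow_eq_one_iff_of_nonneg (norm_nonneg _) two_ne_zero).1 hsq
  · have : u + r • e - y = r • e - (y - u) := by abel
    rw [this]
    exact Kᗮ.sub_mem (Kᗮ.smul_mem r heK) (K.sub_starProjection_mem_orthogonal y)

theorem exists_norm_eq_one_inner_eq [FiniteDimensional ℝ E] {ι : Type*} [Fintype ι]
    (v : ι → E) (hv : Fintype.card ι < finrank ℝ E) {y : E} (hy : ‖y‖ ≤ 1) :
    ∃ c : E, ‖c‖ = 1 ∧ ∀ i, ⟪v i, c⟫ = ⟪v i, y⟫ := by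
  have hK : Submodule.span ℝ (Set.range v) ≠ ⊤ := fun h => by
    have := finrank_range_le_card (R := ℝ) v
    rw [Set.finrank, h, finrank_top] at this
    omega
  obtain ⟨c, hc, hcy⟩ := Submodule.exists_norm_eq_one_sub_mem_orthogonal _ hK hy
  refine ⟨c, hc, fun i => ?_⟩
  have := Submodule.inner_right_of_mem_orthogonal
    (Submodule.subset_span (Set.mem_range_self i)) hcy
  rwa [inner_sub_right, sub_eq_zero] at this

end Completion

namespace Real

theorem one_sub_two_mul_le_one_sub_rpow {x t : ℝ} (hx0 : 0 ≤ x) (hx : x ≤ 1 / 2) (ht : 0 ≤ t) :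
    1 - 2 * t * x ≤ (1 - x) ^ t := by
  have hpos : 0 < 1 - x := by linarith
  have hlog : -(2 * x) ≤ log (1 - x) := by
    -- `log (1 - x) ≥ 1 - (1 - x)⁻¹` and `(1 - x)⁻¹ ≤ 1 + 2 x` for `x ≤ 1 / 2`
    have : (1 - x)⁻¹ ≤ 1 + 2 * x := by
      rw [inv_le_iff_one_le_mul₀ hpos]
      nlinarith
    linarith [one_sub_inv_le_log_of_pos hpos]
  calc 1 - 2 * t * x ≤ 1 + t * log (1 - x) := by nlinarith
    _ ≤ exp (t * log (1 - x)) := by linarith [add_one_le_exp (t * log (1 - x))]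
    _ = (1 - x) ^ t := by rw [rpow_def_of_pos hpos, mul_comm]

theorem one_sub_rpow_le {x s : ℝ} (hx0 : 0 ≤ x) (hx : x ≤ 1 / 2) (hs : 1 ≤ s) :
    (1 - x) ^ s ≤ 1 - s * x + s * (s - 1) * x ^ 2 := by
  let f : ℝ → ℝ := fun y => 1 - s * y + s * (s - 1) * y ^ 2 - (1 - y) ^ s
  let f' : ℝ → ℝ := fun y => -s + s * (s - 1) * (2 * y) + s * (1 - y) ^ (s - 1)
  have hf : ∀ y, HasDerivAt f (f' y) y := fun y => by
    have h1 : HasDerivAt (fun y : ℝ => 1 - y) (-1) y := by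
      simpa using (hasDerivAt_id y).const_sub 1
    refine ((((hasDerivAt_id y).const_mul s).const_sub 1).add
      ((hasDerivAt_pow 2 y).const_mul (s * (s - 1)))).sub (h1.rpow_const (Or.inr hs))
      |>.congr_deriv ?_
    simp only [f']
    push_cast
    ring
  have hmono : MonotoneOn f (Set.Icc 0 (1 / 2)) := by
    refine monotoneOn_of_hasDerivWithinAt_nonneg (convex_Icc _ _)
      (fun y _ => (hf y).continuousAt.continuousWithinAt) (fun y _ => (hf y).hasDerivWithinAt)
      fun y hy => ?_
    rw [interior_Icc] at hy
    have := one_sub_two_mul_le_one_sub_rpow hy.1.le hy.2.le (sub_nonneg.2 hs)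
    simp only [f']
    nlinarith
  have hf0 : f 0 = 0 := by simp [f]
  have : 0 ≤ f x := hf0 ▸ hmono ⟨le_rfl, by norm_num⟩ ⟨hx0, hx⟩ hx0
  simp only [f] at this
  linarith

end Real

section TwoSubRpow

variable {s : ℝ}

theorem two_rpow_mul_le_two_sub_rpow {a : ℝ} (ha : a ≤ 2) (hs : 1 ≤ s) :
    2 ^ s * (1 - s * a / 2) ≤ (2 - a) ^ s := by
  have := one_add_mul_self_le_rpow_one_add (s := -(a / 2)) (by linarith) hs
  rw [show 2 - a = 2 * (1 + -(a / 2)) by ring, Real.mul_rpow zero_le_two (by linarith)]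
  gcongr
  linarith

theorem two_sub_rpow_le_two_rpow_mul {a : ℝ} (ha0 : 0 ≤ a) (ha : a ≤ 1) (hs : 1 ≤ s) :
    (2 - a) ^ s ≤ 2 ^ s * (1 - s * a / 2 + s * (s - 1) * a ^ 2 / 4) := by
  have := Real.one_sub_rpow_le (x := a / 2) (by linarith) (by linarith) hs
  rw [show 2 - a = 2 * (1 - a / 2) by ring, Real.mul_rpow zero_le_two (by linarith)]
  gcongr
  linarith

variable {ι : Type*} [Fintype ι] (a : ι → ℝ)

theorem two_rpow_mul_le_sum_two_sub_rpow (ha : ∀ i, a i ≤ 2) (hs : 1 ≤ s) :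
    2 ^ s * (Fintype.card ι - s / 2 * ∑ i, a i) ≤ ∑ i, (2 - a i) ^ s := by
  calc 2 ^ s * (Fintype.card ι - s / 2 * ∑ i, a i) = ∑ i, 2 ^ s * (1 - s * a i / 2) := by
        simp only [mul_sub, sum_sub_distrib, mul_sum, mul_one, sum_const, card_univ, nsmul_eq_mul]
        ring_nf
    _ ≤ _ := sum_le_sum fun i _ => two_rpow_mul_le_two_sub_rpow (ha i) hs

theorem sum_two_sub_rpow_le_two_rpow_mul (ha0 : ∀ i, 0 ≤ a i) (ha : ∀ i, a i ≤ 1) (hs : 1 ≤ s) :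
    ∑ i, (2 - a i) ^ s ≤
      2 ^ s * (Fintype.card ι - s / 2 * ∑ i, a i + s * (s - 1) / 4 * ∑ i, a i ^ 2) := by
  calc ∑ i, (2 - a i) ^ s ≤ ∑ i, 2 ^ s * (1 - s * a i / 2 + s * (s - 1) * a i ^ 2 / 4) :=
        sum_le_sum fun i _ => two_sub_rpow_le_two_rpow_mul (ha0 i) (ha i) hs
    _ = _ := by
        simp only [mul_add, mul_sub, sum_add_distrib, sum_sub_distrib, mul_sum, mul_one, sum_const,
          card_univ, nsmul_eq_mul]
        ring_nf

end TwoSubRpow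

theorem stmt_9 {d n : ℕ} (hd : 2 * n < d)
    (p q : Fin n → EuclideanSpace ℝ (Fin d))
    (hp : Orthonormal ℝ p) (hq : Orthonormal ℝ q)
    (chat : EuclideanSpace ℝ (Fin d)) (hchat : ‖chat‖ = 1)
    (hgap : (1/2) * Real.sqrt n < (∑ i, |⟪p i, chat⟫|) - ∑ i, |⟪q i, chat⟫|)
    (z : ℝ) (hz : 2 ≤ z) :
    ∃ c : EuclideanSpace ℝ (Fin d), ‖c‖ = 1 ∧
      (2:ℝ)^(z/2) * (z/8) * Real.sqrt n - (2:ℝ)^(z/2) * (z/8) * (z/2 - 1)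
        ≤ (∑ i, (2 - 2 * |⟪q i, c⟫|) ^ (z/2)) - ∑ i, (2 - 2 * |⟪p i, c⟫|) ^ (z/2) := by
  obtain ⟨c, hc, hc_inner⟩ := exists_norm_eq_one_inner_eq (Sum.elim p q)
    (y := (1 / 2 : ℝ) • chat) (by simpa [two_mul] using hd)
    (by rw [norm_smul, hchat]; norm_num)
  have two_mul_abs_inner (v : EuclideanSpace ℝ (Fin d)) (hv : ⟪v, c⟫ = ⟪v, (1 / 2 : ℝ) • chat⟫) :
      2 * |⟪v, c⟫| = |⟪v, chat⟫| := by
    rw [hv, real_inner_smul_right, abs_mul, abs_of_pos one_half_pos]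
    ring
  have abs_inner_le_one {v : Fin n → EuclideanSpace ℝ (Fin d)} (hv : Orthonormal ℝ v) (i : Fin n) :
      |⟪v i, chat⟫| ≤ 1 := by
    simpa [hv.1 i, hchat] using abs_real_inner_le_norm (v i) chat
  have hbessel : ∑ i, |⟪p i, chat⟫| ^ 2 ≤ 1 := by
    simpa [hchat] using hp.sum_inner_products_le (s := univ) chat
  have hq_sum := two_rpow_mul_le_sum_two_sub_rpow (fun i => |⟪q i, chat⟫|)
    (fun i => (abs_inner_le_one hq i).trans one_le_two) (s := z / 2) (by linarith)
  have hp_sum := sum_two_sub_rpow_le_two_rpow_mul (fun i => |⟪p i, chat⟫|)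
    (fun i => abs_nonneg _) (abs_inner_le_one hp) (s := z / 2) (by linarith)
  simp only [Fintype.card_fin] at hq_sum hp_sum
  refine ⟨c, hc, ?_⟩
  simp only [fun i => two_mul_abs_inner (p i) (hc_inner (.inl i)),
    fun i => two_mul_abs_inner (q i) (hc_inner (.inr i))]
  have hkey : z / 8 * √n - z / 8 * (z / 2 - 1) ≤ z / 4 * (∑ i, |⟪p i, chat⟫| -
      ∑ i, |⟪q i, chat⟫|) - z / 2 * (z / 2 - 1) / 4 * ∑ i, |⟪p i, chat⟫| ^ 2 := by
    linarith [mul_le_mul_of_nonneg_left hgap.le (by linarith : 0 ≤ z / 4),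
      mul_le_mul_of_nonneg_left hbessel
        (mul_nonneg (by linarith) (by linarith) : 0 ≤ z / 8 * (z / 2 - 1))]
  linarith [mul_le_mul_of_nonneg_left hkey (Real.rpow_nonneg zero_le_two (z / 2))]
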